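/- Let H be a mesh, τ_1 →^p τ_2 a collective operation step between well-formed distributed types over H (where p is any of allGather(i), dynSlice(i,x), allToAll(i,j), or allPermute), and φ any device map. Then there is a corresponding low-level step ⟨φ, ⟦τ_1⟧_T⟩ ⇒^p ⟨φ, ⟦τ_2⟧_T⟩; that is, every high-level collective operation can be implemented by a low-level collective without changing the device map. -/

import Mathlib

/-! ## Meshes, index tuples, distributed dimensions and types -/

structure Mesh where
  axes : Finset String
  size : String → ℕ
  size_pos : ∀ x ∈ axes, 1 ≤ size x

def Mesh.hasAxis (H : Mesh) (x : String) (n : ℕ) : Prop :=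
  x ∈ H.axes ∧ H.size x = n

abbrev IndexTuple (H : Mesh) : Type :=
  {ι : String → ℕ // ∀ x : String, (x ∈ H.axes → ι x < H.size x) ∧ (x ∉ H.axes → ι x = 0)}

structure Dim where
  tile : ℕ
  axes : List String
  global : ℕ
deriving DecidableEq

abbrev DType := List Dim

def Mesh.WFDim (H : Mesh) (d : Dim) : Prop :=
  1 ≤ d.tile ∧ d.axes.Nodup ∧ (∀ x ∈ d.axes, x ∈ H.axes) ∧
    d.tile * (d.axes.map H.size).prod = d.global

def Mesh.WFType (H : Mesh) (τ : DType) : Prop :=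
  (∀ d ∈ τ, H.WFDim d) ∧ List.Pairwise (fun d e => ∀ x ∈ d.axes, x ∉ e.axes) τ

def globaltype (τ : DType) : List ℕ := τ.map Dim.global
def localtype (τ : DType) : List ℕ := τ.map Dim.tile
def localsize (τ : DType) : ℕ := (τ.map Dim.tile).prod

def typeAxes : DType → List String
  | [] => []
  | d :: τ => d.axes ++ typeAxes τ

/-- Base offset map of a distributed dimension, `⟦c{xs}n⟧_D`. -/
def dimOffset (H : Mesh) : ℕ → List String → (String → ℕ) → ℕ
  | _, [], _ => 0
  | c, x :: xs, ι => c * ι x + dimOffset H (c * H.size x) xs ι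

abbrev BOM (H : Mesh) : Type := IndexTuple H → List ℕ

/-- Base offset map of a distributed type, `⟦τ⟧_T`. -/
def typeOffset (H : Mesh) (τ : DType) : BOM H :=
  fun ι => τ.map (fun d => dimOffset H d.tile d.axes ι.val)

/-! ## Collective operations (high-level typing rules) -/

inductive Label where
  | allGather (i : ℕ)
  | dynSlice (i : ℕ) (x : String)
  | allToAll (i j : ℕ)
  | allPermute
deriving DecidableEq

inductive OpKind where
  | gather | slice | toAll | permute
deriving DecidableEq

def Label.kind : Label → OpKind
  | .allGather _ => .gather
  | .dynSlice _ _ => .slice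
  | .allToAll _ _ => .toAll
  | .allPermute => .permute

inductive Step (H : Mesh) : Label → DType → DType → Prop where
  | allGather {τ : DType} (i : ℕ) {c : ℕ} {x : String} {xs : List String} {s n : ℕ}
      (hwf : H.WFType τ) (hx : H.hasAxis x n)
      (hi : τ[i]? = some ⟨c, x :: xs, s⟩) :
      Step H (.allGather i) τ (τ.set i ⟨c * n, xs, s⟩)
  | dynSlice {τ : DType} (i : ℕ) (x : String) {c : ℕ} {xs : List String} {s n : ℕ}
      (hwf : H.WFType τ) (hx : H.hasAxis x n) (hfresh : x ∉ typeAxes τ)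
      (hi : τ[i]? = some ⟨c * n, xs, s⟩) :
      Step H (.dynSlice i x) τ (τ.set i ⟨c, x :: xs, s⟩)
  | allToAll {τ : DType} (i j : ℕ) {ci : ℕ} {x : String} {xsi : List String} {si cj : ℕ}
      {xsj : List String} {sj n : ℕ}
      (hwf : H.WFType τ) (hij : i ≠ j) (hx : H.hasAxis x n)
      (hi : τ[i]? = some ⟨ci, x :: xsi, si⟩)
      (hj : τ[j]? = some ⟨cj, xsj, sj⟩)
      (hdvd : n ∣ cj) :
      Step H (.allToAll i j) τ ((τ.set i ⟨ci * n, xsi, si⟩).set j ⟨cj / n, x :: xsj, sj⟩)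
  | allPermute {τ₁ τ₂ : DType}
      (hwf1 : H.WFType τ₁) (hwf2 : H.WFType τ₂)
      (hl : localtype τ₁ = localtype τ₂) (hg : globaltype τ₁ = globaltype τ₂) :
      Step H .allPermute τ₁ τ₂

/-! ## Sequences of collective operations -/

inductive CSeq (H : Mesh) : DType → DType → Type where
  | nil (τ : DType) : CSeq H τ τ
  | cons {τ₁ τ₂ τ₃ : DType} (p : Label) (h : Step H p τ₁ τ₂) (s : CSeq H τ₂ τ₃) : CSeq H τ₁ τ₃

def CSeq.labels {H : Mesh} : {τ₁ τ₂ : DType} → CSeq H τ₁ τ₂ → List Label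
  | _, _, .nil _ => []
  | _, _, .cons p _ s => p :: s.labels

def CSeq.typesList {H : Mesh} : {τ₁ τ₂ : DType} → CSeq H τ₁ τ₂ → List DType
  | _, _, .nil τ => [τ]
  | τ, _, .cons _ _ s => τ :: s.typesList

/-- The height 𝔥 of a sequence: the maximum `localsize` over all types in it. -/
def CSeq.height {H : Mesh} {τ₁ τ₂ : DType} (s : CSeq H τ₁ τ₂) : ℕ :=
  (s.typesList.map localsize).foldr max 0

/-- Cost of a single step with source `σ₁` and target `σ₂`. -/
def stepCost (p : Label) (σ₁ σ₂ : DType) : ℕ :=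
  match p with
  | .allGather _ => localsize σ₂
  | .dynSlice _ _ => 0
  | .allToAll _ _ => localsize σ₁
  | .allPermute => localsize σ₁

def CSeq.cost {H : Mesh} : {τ₁ τ₂ : DType} → CSeq H τ₁ τ₂ → ℕ
  | _, _, .nil _ => 0
  | _, _, @CSeq.cons _ σ₁ σ₂ _ p _ s => stepCost p σ₁ σ₂ + s.cost

/-- Normal form: labels matched by `dynSlice* {allToAll | allPermute}* allGather*`. -/
def NormalFormK (ks : List OpKind) : Prop :=
  ∃ a b c : List OpKind, ks = a ++ b ++ c ∧
    (∀ k ∈ a, k = OpKind.slice) ∧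
    (∀ k ∈ b, k = OpKind.toAll ∨ k = OpKind.permute) ∧
    (∀ k ∈ c, k = OpKind.gather)

/-! ## Weak collectives -/

/-- Equivalence of base offset maps. -/
def bomEquiv (H : Mesh) (β₁ β₂ : BOM H) : Prop :=
  ∃ π : Equiv.Perm (IndexTuple H), β₂ = β₁ ∘ π

/-- The weak collective relation `⟦τ₁⟧_E ▶^p ⟦τ₂⟧_E`, represented on types. -/
def WeakStep (H : Mesh) (p : Label) (τ₁ τ₂ : DType) : Prop :=
  p ≠ Label.allPermute ∧ H.WFType τ₁ ∧ H.WFType τ₂ ∧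
  ∃ σ₁ σ₂ : DType, Step H p σ₁ σ₂ ∧
    bomEquiv H (typeOffset H σ₁) (typeOffset H τ₁) ∧
    bomEquiv H (typeOffset H σ₂) (typeOffset H τ₂)

inductive WkSeq (H : Mesh) : DType → DType → Type where
  | nil (τ : DType) : WkSeq H τ τ
  | cons {τ₁ τ₂ τ₃ : DType} (p : Label) (h : WeakStep H p τ₁ τ₂) (s : WkSeq H τ₂ τ₃) :
      WkSeq H τ₁ τ₃

def WkSeq.labels {H : Mesh} : {τ₁ τ₂ : DType} → WkSeq H τ₁ τ₂ → List Label
  | _, _, .nil _ => []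
  | _, _, .cons p _ s => p :: s.labels

def WkSeq.typesList {H : Mesh} : {τ₁ τ₂ : DType} → WkSeq H τ₁ τ₂ → List DType
  | _, _, .nil τ => [τ]
  | τ, _, .cons _ _ s => τ :: s.typesList

def WkSeq.height {H : Mesh} {τ₁ τ₂ : DType} (s : WkSeq H τ₁ τ₂) : ℕ :=
  (s.typesList.map localsize).foldr max 0

def WkSeq.cost {H : Mesh} : {τ₁ τ₂ : DType} → WkSeq H τ₁ τ₂ → ℕ
  | _, _, .nil _ => 0
  | _, _, @WkSeq.cons _ σ₁ σ₂ _ p _ s => stepCost p σ₁ σ₂ + s.cost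

/-! ## Low-level MPI-style collectives on device assignments -/

abbrev DevMap (H : Mesh) (D : Type) := IndexTuple H ≃ D

structure DevAssign (H : Mesh) (D : Type) where
  dmap : DevMap H D
  bom : BOM H

inductive LLabel where
  | allGather (x : String)
  | allToAll (x : String) (j : ℕ)
  | dynSlice (i : ℕ) (x : String)
  | allPermute
deriving DecidableEq

def LLabel.kind : LLabel → OpKind
  | .allGather _ => .gather
  | .allToAll _ _ => .toAll
  | .dynSlice _ _ => .slice
  | .allPermute => .permute

inductive LStep (H : Mesh) (D : Type) : LLabel → DevAssign H D → DevAssign H D → Type where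
  | gather (τ : DType) (i : ℕ) (c : ℕ) (ys : List String) (x : String) (xs : List String)
      (s n : ℕ) (φ φ' : DevMap H D)
      (hwf : H.WFType τ) (hx : H.hasAxis x n)
      (hi : τ[i]? = some ⟨c, ys ++ x :: xs, s⟩)
      (hmap : typeOffset H (τ.set i ⟨c, x :: (ys ++ xs), s⟩) ∘ ⇑φ'.symm
            = typeOffset H τ ∘ ⇑φ.symm) :
      LStep H D (.allGather x) ⟨φ, typeOffset H τ⟩
        ⟨φ', typeOffset H (τ.set i ⟨c * n, ys ++ xs, s⟩)⟩
  | toAll (τ : DType) (i j : ℕ) (ci : ℕ) (ys : List String) (x : String) (xs : List String)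
      (si cj : ℕ) (xsj : List String) (sj n : ℕ) (φ φ' : DevMap H D)
      (hwf : H.WFType τ) (hij : i ≠ j) (hx : H.hasAxis x n)
      (hi : τ[i]? = some ⟨ci, ys ++ x :: xs, si⟩)
      (hj : τ[j]? = some ⟨cj, xsj, sj⟩)
      (hdvd : n ∣ cj)
      (hmap : typeOffset H (τ.set i ⟨ci, x :: (ys ++ xs), si⟩) ∘ ⇑φ'.symm
            = typeOffset H τ ∘ ⇑φ.symm) :
      LStep H D (.allToAll x j) ⟨φ, typeOffset H τ⟩
        ⟨φ', typeOffset H ((τ.set i ⟨ci * n, ys ++ xs, si⟩).set j ⟨cj / n, x :: xsj, sj⟩)⟩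
  | slice (τ : DType) (i : ℕ) (x : String) (c : ℕ) (xs : List String) (s n : ℕ)
      (φ : DevMap H D)
      (hwf : H.WFType τ) (hx : H.hasAxis x n) (hfresh : x ∉ typeAxes τ)
      (hi : τ[i]? = some ⟨c * n, xs, s⟩) :
      LStep H D (.dynSlice i x) ⟨φ, typeOffset H τ⟩ ⟨φ, typeOffset H (τ.set i ⟨c, x :: xs, s⟩)⟩
  | permute (τ : DType) (ρ : Equiv.Perm (IndexTuple H)) (β' : BOM H)
      (φ φ' : DevMap H D) (π : Equiv.Perm D)
      (hwf : H.WFType τ)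
      (hmap : β' ∘ ⇑φ'.symm = (typeOffset H τ ∘ ⇑ρ) ∘ ⇑φ.symm ∘ ⇑π) :
      LStep H D .allPermute ⟨φ, typeOffset H τ ∘ ⇑ρ⟩ ⟨φ', β'⟩

def LStep.cost {H : Mesh} {D : Type} :
    {l : LLabel} → {a b : DevAssign H D} → LStep H D l a b → ℕ
  | _, _, _, .gather τ i c ys x xs s n .. => localsize (τ.set i ⟨c * n, ys ++ xs, s⟩)
  | _, _, _, .toAll τ .. => localsize τ
  | _, _, _, .slice .. => 0
  | _, _, _, .permute τ .. => localsize τ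

inductive LoSeq (H : Mesh) (D : Type) : DevAssign H D → DevAssign H D → Type where
  | nil (a : DevAssign H D) : LoSeq H D a a
  | cons {a b c : DevAssign H D} (l : LLabel) (st : LStep H D l a b) (s : LoSeq H D b c) :
      LoSeq H D a c

def LoSeq.labels {H : Mesh} {D : Type} : {a b : DevAssign H D} → LoSeq H D a b → List LLabel
  | _, _, .nil _ => []
  | _, _, .cons l _ s => l :: s.labels

def LoSeq.states {H : Mesh} {D : Type} : {a b : DevAssign H D} → LoSeq H D a b → List (DevAssign H D)
  | _, _, .nil a => [a]
  | a, _, .cons _ _ s => a :: s.states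

def LoSeq.cost {H : Mesh} {D : Type} : {a b : DevAssign H D} → LoSeq H D a b → ℕ
  | _, _, .nil _ => 0
  | _, _, .cons _ st s => st.cost + s.cost

/-!
For `allGather`, `allToAll` and `dynSlice` the axis being moved already heads its dimension, so
the low-level rule applies with an empty prefix `ys = []` and the unchanged device map.

For `allPermute` one needs a permutation `σ` of index tuples with `⟦τ₁⟧_T ∘ σ = ⟦τ₂⟧_T`.
Mixed-radix coordinates identify the index tuples with `(∏ᵢ Fin Pᵢ) × (free axes)`, where
`Pᵢ = sᵢ / cᵢ` is the number of tiles of dimension `i`, and `⟦τ⟧_T` only reads the first factor.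
Since the `cᵢ` and `Pᵢ` agree for `τ₁` and `τ₂`, the second factors have the same cardinality, and
any bijection between them yields `σ`; conjugating by `φ` turns `σ` into the device permutation.
-/

lemma List.set_eq_self_of_getElem?_eq {α : Type*} {l : List α} {i : ℕ} {a : α}
    (h : l[i]? = some a) : l.set i a = l := by
  obtain ⟨hi, rfl⟩ := List.getElem?_eq_some_iff.1 h
  exact List.set_getElem_self hi

theorem Equiv.exists_perm_fst_eq {X A B₁ B₂ : Type*} [Nonempty X] [Finite A] [Finite B₁]
    [Finite B₂] (E₁ : X ≃ A × B₁) (E₂ : X ≃ A × B₂) :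
    ∃ σ : Equiv.Perm X, ∀ x, (E₁ (σ x)).1 = (E₂ x).1 := by
  have : Nonempty A := ⟨(E₁ (Classical.arbitrary X)).1⟩
  have hcard : Nat.card B₂ = Nat.card B₁ := by
    refine Nat.eq_of_mul_eq_mul_left (Nat.card_pos (α := A)) ?_
    rw [← Nat.card_prod, ← Nat.card_prod, ← Nat.card_congr E₁, ← Nat.card_congr E₂]
  obtain ⟨e⟩ := Finite.card_eq.1 hcard
  exact ⟨E₂.trans (((Equiv.refl A).prodCongr e).trans E₁.symm), fun x => by simp⟩

section DimOffset

variable (H : Mesh)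

lemma dimOffset_mul (a b : ℕ) (xs : List String) (ι : String → ℕ) :
    dimOffset H (a * b) xs ι = a * dimOffset H b xs ι := by
  induction xs generalizing b with
  | nil => simp [dimOffset]
  | cons x xs ih => simp only [dimOffset, mul_assoc, ih, mul_add]

lemma dimOffset_one_cons (x : String) (xs : List String) (ι : String → ℕ) :
    dimOffset H 1 (x :: xs) ι = ι x + H.size x * dimOffset H 1 xs ι := by
  rw [dimOffset, one_mul, one_mul, ← mul_one (H.size x), dimOffset_mul, mul_one]

variable {H}

lemma dimOffset_one_lt {xs : List String} {ι : String → ℕ} (h : ∀ x ∈ xs, ι x < H.size x) :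
    dimOffset H 1 xs ι < (xs.map H.size).prod := by
  induction xs with
  | nil => simp [dimOffset]
  | cons x xs ih =>
    simp only [List.forall_mem_cons] at h
    rw [dimOffset_one_cons, List.map_cons, List.prod_cons]
    calc ι x + H.size x * dimOffset H 1 xs ι
        < H.size x * (dimOffset H 1 xs ι + 1) := by rw [mul_add_one]; linarith [h.1]
      _ ≤ H.size x * (xs.map H.size).prod := Nat.mul_le_mul_left _ (ih h.2)

lemma eq_of_dimOffset_one_eq {xs : List String} {ι ι' : String → ℕ}
    (h : ∀ x ∈ xs, ι x < H.size x) (h' : ∀ x ∈ xs, ι' x < H.size x)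
    (he : dimOffset H 1 xs ι = dimOffset H 1 xs ι') : ∀ x ∈ xs, ι x = ι' x := by
  induction xs with
  | nil => simp
  | cons x xs ih =>
    simp only [List.forall_mem_cons] at h h' ⊢
    rw [dimOffset_one_cons, dimOffset_one_cons] at he
    have hpos : 0 < H.size x := Nat.zero_lt_of_lt h.1
    have hmod := congrArg (· % H.size x) he
    have hdiv := congrArg (· / H.size x) he
    simp only [Nat.add_mul_mod_self_left, Nat.mod_eq_of_lt h.1, Nat.mod_eq_of_lt h'.1,
      Nat.add_mul_div_left _ _ hpos, Nat.div_eq_of_lt h.1, Nat.div_eq_of_lt h'.1,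
      zero_add] at hmod hdiv
    exact ⟨hmod, ih h.2 h'.2 hdiv⟩

end DimOffset

lemma mem_typeAxes {τ : DType} {x : String} : x ∈ typeAxes τ ↔ ∃ d ∈ τ, x ∈ d.axes := by
  induction τ with
  | nil => simp [typeAxes]
  | cons d τ ih => simp [typeAxes, ih]

def dimSizes (H : Mesh) (τ : DType) : List ℕ :=
  τ.map fun d => (d.axes.map H.size).prod

lemma length_dimSizes {H : Mesh} {τ : DType} : (dimSizes H τ).length = τ.length :=
  List.length_map _

lemma prod_map_size_typeAxes (H : Mesh) (τ : DType) :
    ((typeAxes τ).map H.size).prod = (dimSizes H τ).prod := by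
  induction τ with
  | nil => rfl
  | cons d τ ih => simp_all [typeAxes, dimSizes]

namespace Mesh.WFType

variable {H : Mesh} {τ : DType}

lemma mem_axes_of_mem_typeAxes (hwf : H.WFType τ) {x : String} (hx : x ∈ typeAxes τ) :
    x ∈ H.axes := by
  obtain ⟨d, hd, hxd⟩ := mem_typeAxes.1 hx
  exact (hwf.1 d hd).2.2.1 x hxd

lemma typeAxes_nodup (hwf : H.WFType τ) : (typeAxes τ).Nodup := by
  obtain ⟨hdims, hdisj⟩ := hwf
  induction τ with
  | nil => exact List.nodup_nil
  | cons d τ ih =>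
    rw [List.pairwise_cons] at hdisj
    refine List.nodup_append.2 ⟨(hdims d List.mem_cons_self).2.1,
      ih (fun e he => hdims e (List.mem_cons_of_mem d he)) hdisj.2, ?_⟩
    rintro x hxd _ hx rfl
    obtain ⟨e, he, hxe⟩ := mem_typeAxes.1 hx
    exact hdisj.1 e he x hxd hxe

lemma dimSizes_eq_zipWith (hwf : H.WFType τ) :
    dimSizes H τ = List.zipWith (· / ·) (globaltype τ) (localtype τ) := by
  rw [globaltype, localtype, List.zipWith_map, List.zipWith_self, dimSizes]
  refine List.map_congr_left fun d hd => ?_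
  obtain ⟨htile, -, -, hglobal⟩ := hwf.1 d hd
  exact (Nat.div_eq_of_eq_mul_right htile hglobal.symm).symm

end Mesh.WFType

def IndexTuple.equivPi (H : Mesh) : IndexTuple H ≃ ∀ x : H.axes, Fin (H.size x) where
  toFun ι x := ⟨ι.1 x, (ι.2 x).1 x.2⟩
  invFun f := ⟨fun y => if h : y ∈ H.axes then f ⟨y, h⟩ else 0,
    fun y => ⟨fun h => by simp [h], fun h => by simp [h]⟩⟩
  left_inv ι := Subtype.ext <| funext fun y => by
    by_cases h : y ∈ H.axes <;> simp [h, (ι.2 y).2]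
  right_inv f := by ext; simp

lemma IndexTuple.natCard_eq_prod (H : Mesh) :
    Nat.card (IndexTuple H) = ∏ x ∈ H.axes, H.size x := by
  rw [Nat.card_congr (IndexTuple.equivPi H), Nat.card_pi]
  simp only [Nat.card_eq_fintype_card, Fintype.card_fin]
  exact Finset.prod_coe_sort H.axes H.size

instance (H : Mesh) : Nonempty (IndexTuple H) :=
  ⟨⟨fun _ => 0, fun x => ⟨H.size_pos x, fun _ => rfl⟩⟩⟩

abbrev Grid (Ps : List ℕ) : Type := ∀ i : Fin Ps.length, Fin Ps[i.1]

def freeAxes (H : Mesh) (τ : DType) : Finset String := H.axes \ (typeAxes τ).toFinset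

abbrev FreeCoords (H : Mesh) (τ : DType) : Type := ∀ x : freeAxes H τ, Fin (H.size x)

section Coords

variable {H : Mesh} {τ : DType}

def IndexTuple.coords (hwf : H.WFType τ) (ι : IndexTuple H) :
    Grid (dimSizes H τ) × FreeCoords H τ :=
  (fun i => ⟨dimOffset H 1 (τ[i.1]'(length_dimSizes ▸ i.2)).axes ι.1, by
      simp only [dimSizes, List.getElem_map]
      exact dimOffset_one_lt fun x hx =>
        (ι.2 x).1 ((hwf.1 _ (List.getElem_mem _)).2.2.1 x hx)⟩,
    fun x => ⟨ι.1 x, (ι.2 x).1 (Finset.mem_sdiff.1 x.2).1⟩)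

lemma IndexTuple.coords_injective (hwf : H.WFType τ) :
    Function.Injective (IndexTuple.coords hwf) := by
  intro ι ι' he
  refine Subtype.ext (funext fun y => ?_)
  by_cases hy : y ∈ typeAxes τ
  · obtain ⟨d, hd, hyd⟩ := mem_typeAxes.1 hy
    obtain ⟨k, hk, rfl⟩ := List.mem_iff_getElem.1 hd
    have hbound : ∀ ι : IndexTuple H, ∀ x ∈ τ[k].axes, ι.1 x < H.size x := fun ι x hx =>
      (ι.2 x).1 ((hwf.1 _ (List.getElem_mem _)).2.2.1 x hx)
    have hk' : k < (dimSizes H τ).length := length_dimSizes ▸ hk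
    have hcoord := congrArg (fun c => ((c.1 ⟨k, hk'⟩ : ℕ))) he
    exact eq_of_dimOffset_one_eq (hbound ι) (hbound ι') hcoord y hyd
  · by_cases hH : y ∈ H.axes
    · have hfree : y ∈ freeAxes H τ := Finset.mem_sdiff.2 ⟨hH, by simpa using hy⟩
      exact congrArg (fun c => ((c.2 ⟨y, hfree⟩ : ℕ))) he
    · rw [(ι.2 y).2 hH, (ι'.2 y).2 hH]

lemma natCard_grid_prod_freeCoords (hwf : H.WFType τ) :
    Nat.card (Grid (dimSizes H τ) × FreeCoords H τ) = Nat.card (IndexTuple H) := by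
  have hsub : (typeAxes τ).toFinset ⊆ H.axes := fun x hx =>
    hwf.mem_axes_of_mem_typeAxes (List.mem_toFinset.1 hx)
  rw [Nat.card_prod, Nat.card_pi, Nat.card_pi]
  simp only [Nat.card_eq_fintype_card, Fintype.card_fin]
  rw [Fin.prod_univ_getElem, Finset.prod_coe_sort (freeAxes H τ) H.size,
    IndexTuple.natCard_eq_prod, ← prod_map_size_typeAxes,
    ← List.prod_toFinset _ hwf.typeAxes_nodup, mul_comm, freeAxes, Finset.prod_sdiff hsub]

lemma typeOffset_eq_zipWith_coords (hwf : H.WFType τ) (ι : IndexTuple H) :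
    typeOffset H τ ι = List.zipWith (· * ·) (localtype τ)
      (List.ofFn fun i => ((IndexTuple.coords hwf ι).1 i : ℕ)) := by
  refine List.ext_getElem (by simp [typeOffset, localtype, length_dimSizes]) fun k h₁ h₂ => ?_
  simp [typeOffset, localtype, IndexTuple.coords, ← dimOffset_mul]

/-- Stated for any `Ps` equal to `dimSizes H τ`, so that types with equal `dimSizes` get their
coordinates in the same `Grid`. -/
lemma exists_equiv_typeOffset_eq (hwf : H.WFType τ) {Ps : List ℕ} (hPs : dimSizes H τ = Ps) :
    ∃ E : IndexTuple H ≃ Grid Ps × FreeCoords H τ, ∀ ι, typeOffset H τ ι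
      = List.zipWith (· * ·) (localtype τ) (List.ofFn fun i => ((E ι).1 i : ℕ)) := by
  subst hPs
  have hbij := (IndexTuple.coords_injective hwf).bijective_of_nat_card_le
    (natCard_grid_prod_freeCoords hwf).le
  exact ⟨Equiv.ofBijective _ hbij, typeOffset_eq_zipWith_coords hwf⟩

end Coords

theorem exists_perm_typeOffset_eq {H : Mesh} {τ₁ τ₂ : DType} (hwf₁ : H.WFType τ₁)
    (hwf₂ : H.WFType τ₂) (hl : localtype τ₁ = localtype τ₂)
    (hg : globaltype τ₁ = globaltype τ₂) :
    ∃ σ : Equiv.Perm (IndexTuple H), ∀ ι, typeOffset H τ₁ (σ ι) = typeOffset H τ₂ ι := by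
  have hPs : dimSizes H τ₁ = dimSizes H τ₂ := by
    rw [hwf₁.dimSizes_eq_zipWith, hwf₂.dimSizes_eq_zipWith, hl, hg]
  obtain ⟨E₁, h₁⟩ := exists_equiv_typeOffset_eq hwf₁ hPs
  obtain ⟨E₂, h₂⟩ := exists_equiv_typeOffset_eq hwf₂ rfl
  obtain ⟨σ, hσ⟩ := E₁.exists_perm_fst_eq E₂
  exact ⟨σ, fun ι => by rw [h₁, h₂, hσ, hl]⟩

/-- Every high-level collective operation can be implemented by a low-level collective
without changing the device map. -/
theorem stmt18 (H : Mesh) (D : Type) (p : Label) (τ₁ τ₂ : DType)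
    (h : Step H p τ₁ τ₂) (φ : DevMap H D) :
    ∃ l : LLabel, l.kind = p.kind ∧
      Nonempty (LStep H D l ⟨φ, typeOffset H τ₁⟩ ⟨φ, typeOffset H τ₂⟩) := by
  cases h with
  | allGather i hwf hx hi =>
    exact ⟨_, rfl, ⟨.gather τ₁ i _ [] _ _ _ _ φ φ hwf hx hi
      (by rw [List.nil_append, List.set_eq_self_of_getElem?_eq hi])⟩⟩
  | dynSlice i x hwf hx hfresh hi =>
    exact ⟨_, rfl, ⟨.slice τ₁ i x _ _ _ _ φ hwf hx hfresh hi⟩⟩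
  | allToAll i j hwf hij hx hi hj hdvd =>
    exact ⟨_, rfl, ⟨.toAll τ₁ i j _ [] _ _ _ _ _ _ _ φ φ hwf hij hx hi hj hdvd
      (by rw [List.nil_append, List.set_eq_self_of_getElem?_eq hi])⟩⟩
  | allPermute hwf₁ hwf₂ hl hg =>
    obtain ⟨σ, hσ⟩ := exists_perm_typeOffset_eq hwf₁ hwf₂ hl hg
    refine ⟨_, rfl, ⟨.permute τ₁ (Equiv.refl _) _ φ φ (φ.symm.trans (σ.trans φ)) hwf₁ ?_⟩⟩
    funext d
    simp [hσ]
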